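/- arXiv:2203.00892 — 2 statements merged into one kernel-verified Lean document; each statement's English description precedes it below -/
import Mathlib

section
/- The virtual channel matrix H_v is block Hankel: its (i,j)-th N_r × N_t block satisfies H_v^{(i,j)} = H_v^{(k,z)} whenever i + j = k + z, for all 1 ≤ i,j,k,z ≤ (N_s+1)/2. -/
open Matrix

theorem virtual_channel_block_hankel {Ns Nr Nt K M : ℕ}
    (hM : 2 * M = Ns + 1) (Ts : ℝ) (hTs : 0 < Ts)
    (l : Fin (K + 1) → ℂ) (τ θRx θTx : Fin (K + 1) → ℝ)
    (α : ℝ → Fin Nr → ℂ) (β : ℝ → Fin Nt → ℂ)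
    (ξ : ℝ → Fin M → ℂ)
    (hξ : ∀ t (m : Fin M),
      ξ t m = (1 / Real.sqrt M : ℂ) * Complex.exp ((-(2 * Real.pi * m * t / (Ns * Ts)) : ℝ) * Complex.I))
    (Hv : Matrix (Fin M × Fin Nr) (Fin M × Fin Nt) ℂ)
    (hHv : Hv = ∑ k, l k • Matrix.vecMulVec
        (fun p => ξ (τ k) p.1 * α (θRx k) p.2)
        (star ∘ fun p => ξ (-τ k) p.1 * β (θTx k) p.2)) :
    ∀ (i j i' j' : Fin M), (i : ℕ) + (j : ℕ) = (i' : ℕ) + (j' : ℕ) →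
      ∀ (r : Fin Nr) (t : Fin Nt), Hv (i, r) (j, t) = Hv (i', r) (j', t) := by
  have key : ∀ (c : ℝ) (m n m' n' : Fin M), (m : ℕ) + (n : ℕ) = (m' : ℕ) + (n' : ℕ) →
      ξ c m * star (ξ (-c) n) = ξ c m' * star (ξ (-c) n') := by
    intro c m n m' n' h
    have cexp : ∀ x : ℝ, (starRingEnd ℂ) (Complex.exp ((x : ℝ) * Complex.I)) =
        Complex.exp (-((x : ℝ) * Complex.I)) := by
      intro x
      rw [← Complex.exp_conj]
      congr 1
      simp [Complex.conj_ofReal]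
    simp only [hξ, Complex.star_def, _root_.map_mul, map_div₀, _root_.map_one,
      Complex.conj_ofReal, cexp]
    have hh : ((m : ℂ) + n) = ((m' : ℂ) + n') := by
      exact_mod_cast congrArg (Nat.cast : ℕ → ℂ) h
    have expeq : Complex.exp ((-(2 * Real.pi * m * c / (Ns * Ts)) : ℝ) * Complex.I) *
        Complex.exp (-((-(2 * Real.pi * n * -c / (Ns * Ts)) : ℝ) * Complex.I)) =
        Complex.exp ((-(2 * Real.pi * m' * c / (Ns * Ts)) : ℝ) * Complex.I) *
        Complex.exp (-((-(2 * Real.pi * n' * -c / (Ns * Ts)) : ℝ) * Complex.I)) := by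
      rw [← Complex.exp_add, ← Complex.exp_add]
      congr 1
      push_cast
      ring_nf
      ring_nf at hh
      linear_combination (-(2 * Real.pi * c * ((Ns : ℂ) * Ts)⁻¹ * Complex.I)) * hh
    linear_combination (1 / (Real.sqrt M : ℂ)) * (1 / (Real.sqrt M : ℂ)) * expeq
  subst hHv
  intro i j i' j' h r t
  simp only [Matrix.sum_apply, Matrix.smul_apply, vecMulVec_apply, Function.comp_apply,
    smul_eq_mul, star_mul']
  refine Finset.sum_congr rfl fun k _ => ?_
  have hk := key (τ k) i j i' j' h
  linear_combination (l k * α (θRx k) r * star (β (θTx k) t)) * hk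
end

section
/- The (i,j)-th N_r × N_t block of the virtual channel matrix equals the sub-carrier channel matrix of index i+j-2: H_v^{(i,j)} = H^{(i+j-2)} for all 1 ≤ i,j ≤ (N_s+1)/2, where H^{(n)} = ∑_{k=0}^{K} γ_k e^{-j2πnτ_k/(N_s T_s)} α(θ_{Rx,k}) β(θ_{Tx,k})ᴴ. -/
open Matrix

/-!
Entrywise, the `(i, j)` block of `H_v` is `∑ₖ M γₖ ξ(τₖ)ᵢ conj(ξ(-τₖ)ⱼ) α β*`. The two
normalisations `1/√M` cancel against `M`, and conjugating `ξ(-τ)ⱼ` flips the sign of its phase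
back, so the two phases add up to that of sub-carrier `i + j`.
-/

namespace Complex

theorem star_exp_ofReal_mul_I (x : ℝ) : star (exp (x * I)) = exp ((-x : ℝ) * I) := by
  rw [star_def, ← exp_conj, map_mul, conj_ofReal, conj_I, ofReal_neg, mul_neg, neg_mul]

theorem natCast_mul_inv_sqrt_mul_star_inv_sqrt {M : ℕ} (hM : M ≠ 0) :
    (M : ℂ) * ((1 / Real.sqrt M : ℂ) * star (1 / Real.sqrt M : ℂ)) = 1 := by
  have hsqrt : (Real.sqrt M : ℂ) ^ 2 = M := by
    exact_mod_cast Real.sq_sqrt (Nat.cast_nonneg M)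
  have hsqrt_ne : (Real.sqrt M : ℂ) ≠ 0 := by
    exact_mod_cast (Real.sqrt_pos.mpr (by exact_mod_cast Nat.pos_of_ne_zero hM)).ne'
  rw [star_div₀, star_one, star_def, conj_ofReal]
  field_simp
  exact hsqrt.symm

end Complex

open Complex in
theorem natCast_mul_steering_mul_star_steering_neg {Ns M : ℕ} {Ts : ℝ}
    (ξ : ℝ → Fin M → ℂ)
    (hξ : ∀ t (m : Fin M),
      ξ t m = (1 / Real.sqrt M : ℂ) * exp ((-(2 * Real.pi * m * t / (Ns * Ts)) : ℝ) * I))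
    (τ : ℝ) (i j : Fin M) :
    (M : ℂ) * (ξ τ i * star (ξ (-τ) j)) =
      exp ((-(2 * Real.pi * ((i + j : ℕ) : ℝ) * τ / (Ns * Ts)) : ℝ) * I) := by
  have hphase : exp ((-(2 * Real.pi * i * τ / (Ns * Ts)) : ℝ) * I) *
      exp ((-(-(2 * Real.pi * j * -τ / (Ns * Ts))) : ℝ) * I) =
      exp ((-(2 * Real.pi * ((i + j : ℕ) : ℝ) * τ / (Ns * Ts)) : ℝ) * I) := by
    rw [← exp_add]
    congr 1
    push_cast
    ring
  rw [hξ, hξ, star_mul', star_exp_ofReal_mul_I]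
  linear_combination (exp ((-(2 * Real.pi * i * τ / (Ns * Ts)) : ℝ) * I) *
      exp ((-(-(2 * Real.pi * j * -τ / (Ns * Ts))) : ℝ) * I)) *
    natCast_mul_inv_sqrt_mul_star_inv_sqrt i.pos.ne' + hphase

theorem virtual_channel_block_eq_subcarrier_general {Ns Nr Nt K M : ℕ}
    (Ts : ℝ)
    (γ : Fin (K + 1) → ℂ) (τ θRx θTx : Fin (K + 1) → ℝ)
    (α : ℝ → Fin Nr → ℂ) (β : ℝ → Fin Nt → ℂ)
    (ξ : ℝ → Fin M → ℂ)
    (hξ : ∀ t (m : Fin M),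
      ξ t m = (1 / Real.sqrt M : ℂ) * Complex.exp ((-(2 * Real.pi * m * t / (Ns * Ts)) : ℝ) * Complex.I))
    (Hv : Matrix (Fin M × Fin Nr) (Fin M × Fin Nt) ℂ)
    (hHv : Hv = ∑ k, ((M : ℂ) * γ k) • Matrix.vecMulVec
        (fun p => ξ (τ k) p.1 * α (θRx k) p.2)
        (star ∘ fun p => ξ (-τ k) p.1 * β (θTx k) p.2))
    (Hsub : ℕ → Matrix (Fin Nr) (Fin Nt) ℂ)
    (hHsub : ∀ n, Hsub n = ∑ k, γ k • Matrix.vecMulVec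
        (fun r => Complex.exp ((-(2 * Real.pi * n * τ k / (Ns * Ts)) : ℝ) * Complex.I) * α (θRx k) r)
        (star ∘ fun t => β (θTx k) t)) :
    ∀ (i j : Fin M) (r : Fin Nr) (t : Fin Nt),
      Hv (i, r) (j, t) = Hsub ((i : ℕ) + (j : ℕ)) r t := by
  intro i j r t
  rw [hHv, hHsub]
  simp only [Matrix.sum_apply, Matrix.smul_apply, Matrix.vecMulVec_apply, Function.comp_apply,
    smul_eq_mul, star_mul']
  refine Finset.sum_congr rfl fun k _ => ?_
  rw [← natCast_mul_steering_mul_star_steering_neg ξ hξ]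
  ring

theorem virtual_channel_block_eq_subcarrier {Ns Nr Nt K M : ℕ}
    (hM : 2 * M = Ns + 1) (Ts : ℝ) (hTs : 0 < Ts)
    (γ : Fin (K + 1) → ℂ) (τ θRx θTx : Fin (K + 1) → ℝ)
    (α : ℝ → Fin Nr → ℂ) (β : ℝ → Fin Nt → ℂ)
    (ξ : ℝ → Fin M → ℂ)
    (hξ : ∀ t (m : Fin M),
      ξ t m = (1 / Real.sqrt M : ℂ) * Complex.exp ((-(2 * Real.pi * m * t / (Ns * Ts)) : ℝ) * Complex.I))
    (Hv : Matrix (Fin M × Fin Nr) (Fin M × Fin Nt) ℂ)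
    (hHv : Hv = ∑ k, ((M : ℂ) * γ k) • Matrix.vecMulVec
        (fun p => ξ (τ k) p.1 * α (θRx k) p.2)
        (star ∘ fun p => ξ (-τ k) p.1 * β (θTx k) p.2))
    (Hsub : ℕ → Matrix (Fin Nr) (Fin Nt) ℂ)
    (hHsub : ∀ n, Hsub n = ∑ k, γ k • Matrix.vecMulVec
        (fun r => Complex.exp ((-(2 * Real.pi * n * τ k / (Ns * Ts)) : ℝ) * Complex.I) * α (θRx k) r)
        (star ∘ fun t => β (θTx k) t)) :
    ∀ (i j : Fin M) (r : Fin Nr) (t : Fin Nt),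
      Hv (i, r) (j, t) = Hsub ((i : ℕ) + (j : ℕ)) r t :=
  virtual_channel_block_eq_subcarrier_general Ts γ τ θRx θTx α β ξ hξ Hv hHv Hsub hHsub
end
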